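/- arXiv:1805.00102 — 5 statements merged into one kernel-verified Lean document; each statement's English description precedes it below -/
import Mathlib

section
/- Let (M,d) be a metric space, let L₀, L₁ ⊆ M and set S = L₀ ∩ L₁. Fix r > 0, let T = {x ∈ M : dist(x,S) < r/2} be the open (r/2)-neighborhood of S, and set δ(r) = min( r/2, dist(L₀ \ T, L₁ \ T) ), where the distance between two sets is the infimum of distances between their points (+∞ if one of the sets is empty). If γ : [0,1] → M is a continuous path with γ(0) ∈ L₀, γ(1) ∈ L₁, and total variation strictly less than δ(r), then there exists p ∈ S such that γ([0,1]) is contained in the open ball B_r(p). -/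
open Set

/-- **Short paths between two sets stay near their intersection** (metric form of
Lemma 4.7 of Solomon–Verbitsky). Let `L₀, L₁` be subsets of a metric space, let
`S = L₀ ∩ L₁`, let `T` be the open `r/2`-neighborhood of `S`, and let
`δ(r) = min(r/2, dist(L₀ \ T, L₁ \ T))`. If `γ : [0,1] → M` is a continuous path
from `L₀` to `L₁` whose total variation is `< δ(r)`, then the image of `γ` lies in
an open ball of radius `r` centered at some point of `S`. -/
theorem short_path_near_intersection
    {M : Type*} [MetricSpace M] (L₀ L₁ : Set M) (r : ℝ) (hr : 0 < r)
    (γ : ℝ → M) (hγ : ContinuousOn γ (Set.Icc 0 1))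
    (h0 : γ 0 ∈ L₀) (h1 : γ 1 ∈ L₁)
    (hlen : eVariationOn γ (Set.Icc 0 1) <
      min (ENNReal.ofReal (r / 2))
        (⨅ x ∈ L₀ \ Metric.thickening (r / 2) (L₀ ∩ L₁),
          ⨅ y ∈ L₁ \ Metric.thickening (r / 2) (L₀ ∩ L₁), edist x y)) :
    ∃ p ∈ L₀ ∩ L₁, γ '' Set.Icc 0 1 ⊆ Metric.ball p r := by
  have h01 : (0 : ℝ) ∈ Set.Icc (0:ℝ) 1 := by constructor <;> norm_num
  have h11 : (1 : ℝ) ∈ Set.Icc (0:ℝ) 1 := by constructor <;> norm_num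
  have hhalf : eVariationOn γ (Set.Icc 0 1) < ENNReal.ofReal (r / 2) :=
    hlen.trans_le (min_le_left _ _)
  have key : ∀ a ∈ Set.Icc (0:ℝ) 1, γ a ∈ Metric.thickening (r / 2) (L₀ ∩ L₁) →
      ∃ p ∈ L₀ ∩ L₁, γ '' Set.Icc 0 1 ⊆ Metric.ball p r := by
    intro a ha haT
    rw [Metric.mem_thickening_iff] at haT
    obtain ⟨p, hpS, hpd⟩ := haT
    refine ⟨p, hpS, ?_⟩
    rintro _ ⟨t, ht, rfl⟩
    have hd : edist (γ t) (γ a) ≤ eVariationOn γ (Set.Icc 0 1) :=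
      eVariationOn.edist_le γ ht ha
    have hd' : dist (γ t) (γ a) < r / 2 := by
      rw [← edist_lt_ofReal]
      exact hd.trans_lt hhalf
    have := dist_triangle (γ t) (γ a) p
    simp only [Metric.mem_ball]
    linarith
  by_cases hT0 : γ 0 ∈ Metric.thickening (r / 2) (L₀ ∩ L₁)
  · exact key 0 h01 hT0
  by_cases hT1 : γ 1 ∈ Metric.thickening (r / 2) (L₀ ∩ L₁)
  · exact key 1 h11 hT1
  exfalso
  have hinf : (⨅ x ∈ L₀ \ Metric.thickening (r / 2) (L₀ ∩ L₁),
      ⨅ y ∈ L₁ \ Metric.thickening (r / 2) (L₀ ∩ L₁), edist x y) ≤ edist (γ 0) (γ 1) := by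
    refine le_trans (iInf₂_le (γ 0) ⟨h0, hT0⟩) ?_
    exact iInf₂_le (γ 1) ⟨h1, hT1⟩
  have : edist (γ 0) (γ 1) ≤ eVariationOn γ (Set.Icc 0 1) :=
    eVariationOn.edist_le γ h01 h11
  exact absurd (hlen.trans_le ((min_le_right _ _).trans (hinf.trans this))) (lt_irrefl _)
end

section
/- Let U ⊆ ℝⁿ be open with 0 ∈ U, let f : U → ℝ be real analytic with ∇f(0) = 0, and set Q₀ = ℝⁿ × {0} ⊆ ℂⁿ and Q₁ = graph(∇f) = {x + i∇f(x) : x ∈ U}. Then there exists ε₀ > 0 such that for every ε ∈ (0, ε₀] the following holds: for every piecewise-C¹ path γ : [0,1] → B_{ε/9}(0) ⊆ ℂⁿ with γ(0) ∈ Q₀ and γ(1) ∈ Q₁, there exists a continuous, piecewise-C¹ map v : H → B_ε(γ(0)) with v([0,1]) ⊆ Q₀, v([−1,0]) ⊆ Q₁, v(0) = 0, and v(e^{iπt}) = γ(t) for all t ∈ [0,1]. -/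
open Complex MeasureTheory Set

noncomputable section

/-- The closed upper half-disk `H = {z ∈ ℂ : Im z ≥ 0, |z| ≤ 1}`. -/
def HDisk : Set ℂ := {z : ℂ | 0 ≤ z.im ∧ ‖z‖ ≤ 1}

/-- Real part, `ℂⁿ → ℝⁿ`, under the identification `ℂⁿ = ℝⁿ ⊕ iℝⁿ`. -/
def reP (n : ℕ) (z : EuclideanSpace ℂ (Fin n)) : EuclideanSpace ℝ (Fin n) :=
  WithLp.toLp 2 (fun k => (z k).re)

/-- Imaginary part, `ℂⁿ → ℝⁿ`, under the identification `ℂⁿ = ℝⁿ ⊕ iℝⁿ`. -/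
def imP (n : ℕ) (z : EuclideanSpace ℂ (Fin n)) : EuclideanSpace ℝ (Fin n) :=
  WithLp.toLp 2 (fun k => (z k).im)

/-- The standard symplectic form `ω₀(u,v) = ∑ₖ (Re uₖ · Im vₖ − Im uₖ · Re vₖ)` on `ℂⁿ`. -/
def omega0 (n : ℕ) (u v : EuclideanSpace ℂ (Fin n)) : ℝ :=
  ∑ k, ((u k).re * (v k).im - (u k).im * (v k).re)

/-- The Lagrangian `Q₀ = ℝⁿ × {0} ⊆ ℂⁿ`. -/
def Q0 (n : ℕ) : Set (EuclideanSpace ℂ (Fin n)) := {z | ∀ k, (z k).im = 0}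

/-- The Lagrangian `Q₁ = graph(∇f) = {x + i∇f(x) : x ∈ U} ⊆ ℂⁿ`. -/
def Q1 (n : ℕ) (U : Set (EuclideanSpace ℝ (Fin n)))
    (f : EuclideanSpace ℝ (Fin n) → ℝ) : Set (EuclideanSpace ℂ (Fin n)) :=
  {z | reP n z ∈ U ∧ imP n z = gradient f (reP n z)}

/-- A map `v : ℂ → ℂⁿ` is piecewise `C¹` on a set `s` if it is continuous on `s` and
`s` is covered by finitely many compact pieces on each of which `v` is `C¹`. -/
def PiecewiseC1On (n : ℕ) (v : ℂ → EuclideanSpace ℂ (Fin n)) (s : Set ℂ) : Prop :=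
  ContinuousOn v s ∧ ∃ (m : ℕ) (K : Fin m → Set ℂ),
    (∀ i, IsCompact (K i)) ∧ s ⊆ ⋃ i, K i ∧ ∀ i, ContDiffOn ℝ 1 v (K i)

/-- A path `γ : [0,1] → ℂⁿ` is piecewise `C¹` if it is continuous on `[0,1]` and `C¹`
on each interval of some finite partition `0 = t₀ ≤ ⋯ ≤ t_m = 1`. -/
def PiecewiseC1Path (n : ℕ) (γ : ℝ → EuclideanSpace ℂ (Fin n)) : Prop :=
  ContinuousOn γ (Set.Icc 0 1) ∧ ∃ (m : ℕ) (t : Fin (m + 1) → ℝ),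
    Monotone t ∧ t 0 = 0 ∧ t (Fin.last m) = 1 ∧
    ∀ i : Fin m, ContDiffOn ℝ 1 γ (Set.Icc (t i.castSucc) (t i.succ))

/-- The length `ℓ(γ) = ∫₀¹ ‖γ′(t)‖ dt` of a path `γ : [0,1] → ℂⁿ`. -/
def pathLength (n : ℕ) (γ : ℝ → EuclideanSpace ℂ (Fin n)) : ℝ :=
  ∫ t in (0:ℝ)..1, ‖deriv γ t‖

/-- The pullback integral `∫_H v*ω₀ = ∫_H ω₀(∂ₓv(z), ∂_yv(z)) dx dy`. -/
def formIntegral (n : ℕ) (v : ℂ → EuclideanSpace ℂ (Fin n)) : ℝ :=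
  ∫ z in HDisk, omega0 n (fderiv ℝ v z 1) (fderiv ℝ v z Complex.I)

/-!
Let `a = Re γ(1)`, so that `γ(1) = a + i∇f(a)`. The path `δ(s) = s a + i∇f(s a)` runs in `Q₁`
from `0` to `γ(1)`, and it stays small: `∇f` has a strict derivative at `0` and vanishes there,
so near `0` we have `‖∇f(s a)‖ ≤ ‖∇f(a)‖ + 2‖a‖` for `s ∈ [0,1]`.

The filling is written in polar coordinates `z = ρ e^{iπθ}` on `H`: it is `δ(0) = 0` for
`ρ ≤ 1/4`, it sweeps out `δ` as `δ((4ρ - 1)θ)` for `1/4 ≤ ρ ≤ 1/2`, and it interpolates linearly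
as `(2ρ - 1)γ(θ) + (2 - 2ρ)δ(θ)` for `1/2 ≤ ρ ≤ 1`. On `[0,1]` (`θ = 0`) its values lie on the
segment from `0` to `γ(0)`, inside `Q₀`; on `[-1,0]` (`θ = 1`) they are values of `δ`, inside
`Q₁`; and they lie in every convex set containing the images of `γ` and `δ`. It is `C¹` on the
compact pieces cut out by `ρ` and by the partition of `γ`, because on the closed upper half-plane
minus `0` the argument equals `π/2 + arg(-iz)` with `-iz` in the slit plane.
-/

open Filter Metric Topology
open scoped Real

section ReIm

variable {n : ℕ}

def ofReIm (n : ℕ) (x y : EuclideanSpace ℝ (Fin n)) : EuclideanSpace ℂ (Fin n) :=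
  WithLp.toLp 2 fun k => (x k : ℂ) + (y k : ℂ) * I

@[simp]
lemma reP_ofReIm (x y : EuclideanSpace ℝ (Fin n)) : reP n (ofReIm n x y) = x := by
  ext k; simp [reP, ofReIm]

@[simp]
lemma imP_ofReIm (x y : EuclideanSpace ℝ (Fin n)) : imP n (ofReIm n x y) = y := by
  ext k; simp [imP, ofReIm]

lemma ofReIm_reP_imP (z : EuclideanSpace ℂ (Fin n)) : ofReIm n (reP n z) (imP n z) = z := by
  ext k; apply Complex.ext <;> simp [ofReIm, reP, imP]

@[simp]
lemma ofReIm_zero : ofReIm n 0 0 = 0 := by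
  ext k; simp [ofReIm]

lemma norm_reP_sq_add_norm_imP_sq (z : EuclideanSpace ℂ (Fin n)) :
    ‖reP n z‖ ^ 2 + ‖imP n z‖ ^ 2 = ‖z‖ ^ 2 := by
  simp only [EuclideanSpace.norm_sq_eq, ← Finset.sum_add_distrib, Complex.sq_norm,
    Complex.normSq_apply, reP, imP, Real.norm_eq_abs, sq_abs]
  exact Finset.sum_congr rfl fun k _ => by ring

lemma norm_reP_le (z : EuclideanSpace ℂ (Fin n)) : ‖reP n z‖ ≤ ‖z‖ := by
  refine (pow_le_pow_iff_left₀ (norm_nonneg _) (norm_nonneg _) two_ne_zero).1 ?_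
  linarith [norm_reP_sq_add_norm_imP_sq z, sq_nonneg ‖imP n z‖]

lemma norm_imP_le (z : EuclideanSpace ℂ (Fin n)) : ‖imP n z‖ ≤ ‖z‖ := by
  refine (pow_le_pow_iff_left₀ (norm_nonneg _) (norm_nonneg _) two_ne_zero).1 ?_
  linarith [norm_reP_sq_add_norm_imP_sq z, sq_nonneg ‖reP n z‖]

lemma norm_ofReIm_le (x y : EuclideanSpace ℝ (Fin n)) : ‖ofReIm n x y‖ ≤ ‖x‖ + ‖y‖ := by
  refine (pow_le_pow_iff_left₀ (norm_nonneg _) (by positivity) two_ne_zero).1 ?_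
  have := norm_reP_sq_add_norm_imP_sq (ofReIm n x y)
  rw [reP_ofReIm, imP_ofReIm] at this
  nlinarith [norm_nonneg x, norm_nonneg y]

lemma ContDiffOn.ofReIm {k : WithTop ℕ∞} {s : Set ℝ} {x y : ℝ → EuclideanSpace ℝ (Fin n)}
    (hx : ContDiffOn ℝ k x s) (hy : ContDiffOn ℝ k y s) :
    ContDiffOn ℝ k (fun t => ofReIm n (x t) (y t)) s := by
  refine (contDiffOn_piLp 2).2 fun j => ?_
  have hxj := ofRealCLM.contDiff.comp_contDiffOn ((contDiffOn_piLp 2).1 hx j)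
  have hyj := ofRealCLM.contDiff.comp_contDiffOn ((contDiffOn_piLp 2).1 hy j)
  exact hxj.add (hyj.mul contDiffOn_const)

lemma convex_Q0 : Convex ℝ (Q0 n) := fun x hx y hy a b _ _ _ k => by
  simp [hx k, hy k]

lemma eq_ofReIm_of_mem_Q1 {U : Set (EuclideanSpace ℝ (Fin n))}
    {f : EuclideanSpace ℝ (Fin n) → ℝ} {z : EuclideanSpace ℂ (Fin n)} (hz : z ∈ Q1 n U f) :
    z = ofReIm n (reP n z) (gradient f (reP n z)) := by
  rw [← hz.2, ofReIm_reP_imP]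

end ReIm

section Gradient

variable {E F : Type*} [NormedAddCommGroup E] [NormedSpace ℝ E] [NormedAddCommGroup F]
  [NormedSpace ℝ F]

lemma HasStrictFDerivAt.eventually_norm_apply_smul_le {g : E → F} {T : E →L[ℝ] F}
    (hg : HasStrictFDerivAt g T 0) (h0 : g 0 = 0) :
    ∀ᶠ x in 𝓝 0, ∀ t ∈ Icc (0 : ℝ) 1, ‖g (t • x)‖ ≤ ‖g x‖ + 2 * ‖x‖ := by
  obtain ⟨s, hs, hgT⟩ := hg.approximates_deriv_on_nhds (c := 1) (Or.inr one_pos)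
  obtain ⟨r, hr, hrs⟩ := Metric.mem_nhds_iff.1 hs
  filter_upwards [ball_mem_nhds 0 hr] with x hx t ht
  have h0r := hrs (mem_ball_self hr)
  have h1 := hgT _ (hrs ((convex_ball 0 r).smul_mem_of_zero_mem (mem_ball_self hr) hx ht)) _ h0r
  have h2 := hgT _ (hrs hx) _ h0r
  simp only [h0, sub_zero, NNReal.coe_one, one_mul, map_smul, norm_smul, Real.norm_eq_abs,
    abs_of_nonneg ht.1] at h1 h2
  have hTx : ‖T x‖ ≤ ‖g x‖ + ‖x‖ := by
    linarith [norm_sub_norm_le (T x) (g x), norm_sub_rev (T x) (g x)]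
  have hgt : ‖g (t • x)‖ ≤ t * ‖x‖ + t * ‖T x‖ := by
    have : ‖t • T x‖ = t * ‖T x‖ := by rw [norm_smul, Real.norm_of_nonneg ht.1]
    linarith [norm_sub_norm_le (g (t • x)) (t • T x)]
  nlinarith [ht.1, ht.2, norm_nonneg x, norm_nonneg (g x)]

end Gradient

lemma AnalyticOnNhd.gradient {E : Type*} [NormedAddCommGroup E] [InnerProductSpace ℝ E]
    [CompleteSpace E] {f : E → ℝ} {U : Set E} (hf : AnalyticOnNhd ℝ f U) :
    AnalyticOnNhd ℝ (gradient f) U := fun x hx =>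
  ((InnerProductSpace.toDual ℝ E).symm.toContinuousLinearEquiv.toContinuousLinearMap.analyticAt
    _).comp (hf.fderiv x hx)

section GradientGraph

variable {n : ℕ} {f : EuclideanSpace ℝ (Fin n) → ℝ} {a : EuclideanSpace ℝ (Fin n)}

def gradientGraphPath (f : EuclideanSpace ℝ (Fin n) → ℝ) (a : EuclideanSpace ℝ (Fin n)) :
    ℝ → EuclideanSpace ℂ (Fin n) :=
  fun s => ofReIm n (s • a) (gradient f (s • a))

lemma gradientGraphPath_mem_Q1 {U : Set (EuclideanSpace ℝ (Fin n))} {s : ℝ} (hs : s • a ∈ U) :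
    gradientGraphPath f a s ∈ Q1 n U f := by
  simp [gradientGraphPath, Q1, hs]

lemma gradientGraphPath_zero (hf : gradient f 0 = 0) : gradientGraphPath f a 0 = 0 := by
  simp [gradientGraphPath, hf]

lemma gradientGraphPath_one : gradientGraphPath f a 1 = ofReIm n a (gradient f a) := by
  simp [gradientGraphPath]

lemma norm_gradientGraphPath_le (s : ℝ) :
    ‖gradientGraphPath f a s‖ ≤ ‖s • a‖ + ‖gradient f (s • a)‖ :=
  norm_ofReIm_le _ _

lemma contDiffOn_gradientGraphPath {k : WithTop ℕ∞} {U : Set (EuclideanSpace ℝ (Fin n))}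
    {I : Set ℝ} (hf : ContDiffOn ℝ k (gradient f) U) (hI : MapsTo (· • a) I U) :
    ContDiffOn ℝ k (gradientGraphPath f a) I := by
  have hline : ContDiffOn ℝ k (· • a) I := (contDiff_id.smul contDiff_const).contDiffOn
  exact hline.ofReIm (hf.comp hline hI)

lemma exists_pos_forall_gradientGraphPath {U : Set (EuclideanSpace ℝ (Fin n))} (hU : IsOpen U)
    (hU0 : 0 ∈ U) (hf : AnalyticOn ℝ f U) (hgrad : gradient f 0 = 0) :
    ∃ r > 0, ∀ a ∈ ball (0 : EuclideanSpace ℝ (Fin n)) r,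
      ContDiffOn ℝ 1 (gradientGraphPath f a) (Icc 0 1) ∧
        ∀ s ∈ Icc (0 : ℝ) 1, gradientGraphPath f a s ∈ Q1 n U f ∧
          ‖gradientGraphPath f a s‖ ≤ ‖gradient f a‖ + 3 * ‖a‖ := by
  have hgradU : AnalyticOnNhd ℝ (gradient f) U :=
    (hU.analyticOn_iff_analyticOnNhd.1 hf).gradient
  obtain ⟨r, hr, hball⟩ := eventually_nhds_iff_ball.1 ((hU.eventually_mem hU0).and
    ((hgradU 0 hU0).hasStrictFDerivAt.eventually_norm_apply_smul_le hgrad))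
  refine ⟨r, hr, fun a ha => ?_⟩
  have hseg : MapsTo (· • a) (Icc (0 : ℝ) 1) U := fun s hs =>
    (hball _ ((convex_ball 0 r).smul_mem_of_zero_mem (mem_ball_self hr) ha hs)).1
  refine ⟨contDiffOn_gradientGraphPath hgradU.contDiffOn_of_completeSpace hseg,
    fun s hs => ⟨gradientGraphPath_mem_Q1 (hseg hs), ?_⟩⟩
  have hsa : ‖s • a‖ ≤ ‖a‖ := by
    rw [norm_smul, Real.norm_of_nonneg hs.1]
    exact mul_le_of_le_one_left (norm_nonneg a) hs.2
  linarith [norm_gradientGraphPath_le (f := f) (a := a) s, (hball a ha).2 s hs]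

end GradientGraph

section Arg

lemma arg_eq_arg_neg_I_mul_add_pi_div_two {z : ℂ} (hz : 0 ≤ z.im) (hz0 : z ≠ 0) :
    arg z = arg (-I * z) + π / 2 := by
  have hw : -I * z ≠ 0 := mul_ne_zero (neg_ne_zero.2 I_ne_zero) hz0
  have hre : 0 ≤ (-I * z).re := by simpa using hz
  have hbound := abs_le.1 (abs_arg_le_pi_div_two_iff.2 hre)
  have hmul := arg_mul I_ne_zero hw ⟨by linarith [arg_I, Real.pi_pos], by linarith [arg_I]⟩
  rw [← mul_assoc, mul_neg, I_mul_I, neg_neg, one_mul, arg_I] at hmul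
  rw [hmul, add_comm]

lemma neg_I_mul_mem_slitPlane {z : ℂ} (hz : 0 ≤ z.im) (hz0 : z ≠ 0) : -I * z ∈ slitPlane := by
  rcases hz.lt_or_eq with hz | hz
  · exact Or.inl (by simpa using hz)
  · refine Or.inr (by simpa using fun h => hz0 (Complex.ext h hz.symm))

lemma contDiffAt_arg {k : WithTop ℕ∞} {z : ℂ} (hz : z ∈ slitPlane) : ContDiffAt ℝ k arg z := by
  have := imCLM.contDiff.contDiffAt.comp z ((contDiffAt_log hz (n := k)).restrict_scalars ℝ)
  simpa only [Function.comp_def, imCLM_apply, log_im] using this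

lemma contDiffOn_arg_of_im_nonneg {k : WithTop ℕ∞} :
    ContDiffOn ℝ k arg ({z : ℂ | 0 ≤ z.im} \ {0}) := fun z hz => by
  have hrot : ContDiffAt ℝ k (fun w => arg (-I * w) + π / 2) z :=
    ((contDiffAt_arg (neg_I_mul_mem_slitPlane hz.1 hz.2)).comp z
      (contDiff_const.mul contDiff_id).contDiffAt).add contDiffAt_const
  exact hrot.contDiffWithinAt.congr
    (fun w hw => arg_eq_arg_neg_I_mul_add_pi_div_two hw.1 hw.2)
    (arg_eq_arg_neg_I_mul_add_pi_div_two hz.1 hz.2)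

end Arg

section PolarFill

variable {E : Type*} [NormedAddCommGroup E] [NormedSpace ℝ E] {γ δ : ℝ → E} {z : ℂ}

def normalizedArg (z : ℂ) : ℝ := arg z / π

lemma normalizedArg_mem_Icc (hz : 0 ≤ z.im) : normalizedArg z ∈ Icc (0 : ℝ) 1 :=
  ⟨div_nonneg (arg_nonneg_iff.2 hz) Real.pi_pos.le,
    div_le_one_of_le₀ (arg_le_pi z) Real.pi_pos.le⟩

lemma normalizedArg_ofReal_of_nonneg {t : ℝ} (ht : 0 ≤ t) : normalizedArg t = 0 := by
  simp [normalizedArg, arg_ofReal_of_nonneg ht]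

lemma normalizedArg_ofReal_of_neg {t : ℝ} (ht : t < 0) : normalizedArg t = 1 := by
  simp [normalizedArg, arg_ofReal_of_neg ht, Real.pi_ne_zero]

lemma normalizedArg_exp_mul_I {t : ℝ} (ht : t ∈ Icc (0 : ℝ) 1) :
    normalizedArg (exp (↑(π * t) * I)) = t := by
  have hpi := Real.pi_pos
  rw [normalizedArg, exp_mul_I,
    arg_cos_add_sin_mul_I ⟨by nlinarith [ht.1], by nlinarith [ht.2]⟩]
  field_simp

lemma contDiffOn_normalizedArg {k : WithTop ℕ∞} :
    ContDiffOn ℝ k normalizedArg ({z : ℂ | 0 ≤ z.im} \ {0}) :=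
  contDiffOn_arg_of_im_nonneg.div_const _

def polarFill (γ δ : ℝ → E) (z : ℂ) : E :=
  if 1 / 2 ≤ ‖z‖ then
    (2 * ‖z‖ - 1) • γ (normalizedArg z) + (2 - 2 * ‖z‖) • δ (normalizedArg z)
  else δ (max 0 (4 * ‖z‖ - 1) * normalizedArg z)

lemma polarFill_of_norm_le (hz : ‖z‖ ≤ 1 / 4) : polarFill γ δ z = δ 0 := by
  rw [polarFill, if_neg (by linarith), max_eq_left (by linarith), zero_mul]

lemma polarFill_of_half_le_norm (hz : 1 / 2 ≤ ‖z‖) :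
    polarFill γ δ z =
      (2 * ‖z‖ - 1) • γ (normalizedArg z) + (2 - 2 * ‖z‖) • δ (normalizedArg z) :=
  if_pos hz

lemma polarFill_of_norm_mem_Icc (hz : ‖z‖ ∈ Icc (1 / 4 : ℝ) (1 / 2)) :
    polarFill γ δ z = δ ((4 * ‖z‖ - 1) * normalizedArg z) := by
  rcases hz.2.lt_or_eq with h | h
  · rw [polarFill, if_neg (not_le.2 h), max_eq_right (by linarith [hz.1])]
  · rw [polarFill_of_half_le_norm h.ge, h]
    norm_num

lemma polarFill_zero : polarFill γ δ 0 = δ 0 :=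
  polarFill_of_norm_le (by norm_num)

lemma polarFill_exp_mul_I {t : ℝ} (ht : t ∈ Icc (0 : ℝ) 1) :
    polarFill γ δ (exp (↑(π * t) * I)) = γ t := by
  rw [polarFill_of_half_le_norm (by rw [norm_exp_ofReal_mul_I]; norm_num),
    norm_exp_ofReal_mul_I, normalizedArg_exp_mul_I ht]
  norm_num

lemma polarFill_mem_of_convex {S : Set E} (hS : Convex ℝ S) (hz : z ∈ HDisk)
    (hγ : γ (normalizedArg z) ∈ S) (hδ : ∀ s ∈ Icc 0 (normalizedArg z), δ s ∈ S) :
    polarFill γ δ z ∈ S := by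
  have hθ := normalizedArg_mem_Icc hz.1
  by_cases h : 1 / 2 ≤ ‖z‖
  · rw [polarFill_of_half_le_norm h]
    exact hS hγ (hδ _ ⟨hθ.1, le_rfl⟩) (by linarith) (by linarith [hz.2]) (by ring)
  · rw [polarFill, if_neg h]
    exact hδ _ ⟨mul_nonneg (le_max_left _ _) hθ.1,
      mul_le_of_le_one_left hθ.1 (max_le zero_le_one (by linarith))⟩

lemma polarFill_ofReal_mem_segment {t : ℝ} (ht : t ∈ Icc (0 : ℝ) 1) :
    polarFill γ δ t ∈ segment ℝ (δ 0) (γ 0) := by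
  have hθ : normalizedArg t = 0 := normalizedArg_ofReal_of_nonneg ht.1
  refine polarFill_mem_of_convex (convex_segment _ _) ?_ ?_ ?_
  · exact ⟨by simp, by rw [norm_real, Real.norm_of_nonneg ht.1]; exact ht.2⟩
  · rw [hθ]; exact right_mem_segment ℝ _ _
  · rw [hθ]
    rintro s ⟨hs0, hs1⟩
    rw [le_antisymm hs1 hs0]
    exact left_mem_segment ℝ _ _

lemma polarFill_ofReal_mem_image (hδγ : δ 1 = γ 1) {t : ℝ} (ht : t ≤ 0) :
    polarFill γ δ t ∈ δ '' Icc 0 1 := by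
  rcases ht.lt_or_eq with ht | rfl
  · have hnorm : ‖(t : ℂ)‖ = -t := by rw [norm_real, Real.norm_of_nonpos ht.le]
    rw [polarFill, hnorm, normalizedArg_ofReal_of_neg ht, mul_one]
    split_ifs with h
    · refine ⟨1, ⟨zero_le_one, le_rfl⟩, ?_⟩
      rw [← hδγ, ← add_smul, show 2 * -t - 1 + (2 - 2 * -t) = 1 by ring, one_smul]
    · exact ⟨_, ⟨le_max_left _ _, max_le zero_le_one (by linarith)⟩, rfl⟩
  · rw [ofReal_zero, polarFill_zero]
    exact ⟨0, ⟨le_rfl, zero_le_one⟩, rfl⟩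

end PolarFill

section PolarFillSmooth

variable {E : Type*} [NormedAddCommGroup E] [NormedSpace ℝ E] {γ δ : ℝ → E}
  {k : WithTop ℕ∞}

lemma contDiffOn_norm_of_zero_notMem {F : Type*} [NormedAddCommGroup F]
    [InnerProductSpace ℝ F] {s : Set F} (hs : 0 ∉ s) : ContDiffOn ℝ k (‖·‖) s := fun _ hz =>
  (contDiffAt_norm ℝ (ne_of_mem_of_not_mem hz hs)).contDiffWithinAt

lemma contDiffOn_polarFill_inner : ContDiffOn ℝ k (polarFill γ δ) (closedBall 0 (1 / 4)) :=
  contDiffOn_const.congr fun _ hz => polarFill_of_norm_le (mem_closedBall_zero_iff.1 hz)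

lemma contDiffOn_polarFill_annulus (hδ : ContDiffOn ℝ k δ (Icc 0 1)) :
    ContDiffOn ℝ k (polarFill γ δ) (closedBall 0 (1 / 2) ∩ {z | 0 ≤ z.im ∧ 1 / 4 ≤ ‖z‖}) := by
  set A := closedBall (0 : ℂ) (1 / 2) ∩ {z | 0 ≤ z.im ∧ 1 / 4 ≤ ‖z‖}
  have hA : A ⊆ {z | 0 ≤ z.im} \ {0} := fun z hz =>
    ⟨hz.2.1, norm_pos_iff.1 (by linarith [hz.2.2])⟩
  have hradius : ContDiffOn ℝ k (fun z => (4 * ‖z‖ - 1) * normalizedArg z) A :=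
    ((contDiffOn_const.mul (contDiffOn_norm_of_zero_notMem fun h => (hA h).2 rfl)).sub
      contDiffOn_const).mul (contDiffOn_normalizedArg.mono hA)
  have hmaps : MapsTo (fun z => (4 * ‖z‖ - 1) * normalizedArg z) A (Icc 0 1) := fun z hz => by
    have hθ := normalizedArg_mem_Icc hz.2.1
    have hz2 := mem_closedBall_zero_iff.1 hz.1
    exact ⟨mul_nonneg (by linarith [hz.2.2]) hθ.1, mul_le_one₀ (by linarith) hθ.1 hθ.2⟩
  exact (hδ.comp hradius hmaps).congr fun z hz =>
    polarFill_of_norm_mem_Icc ⟨hz.2.2, mem_closedBall_zero_iff.1 hz.1⟩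

lemma contDiffOn_polarFill_outer {J : Set ℝ} (hγ : ContDiffOn ℝ k γ J)
    (hδ : ContDiffOn ℝ k δ (Icc 0 1)) :
    ContDiffOn ℝ k (polarFill γ δ) ((HDisk ∩ {z | 1 / 2 ≤ ‖z‖}) ∩ normalizedArg ⁻¹' J) := by
  set B := (HDisk ∩ {z | 1 / 2 ≤ ‖z‖}) ∩ normalizedArg ⁻¹' J
  have hB : B ⊆ {z | 0 ≤ z.im} \ {0} := fun z hz =>
    ⟨hz.1.1.1, norm_pos_iff.1 (by linarith [show (1 : ℝ) / 2 ≤ ‖z‖ from hz.1.2])⟩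
  have hnorm : ContDiffOn ℝ k (‖·‖) B := contDiffOn_norm_of_zero_notMem fun h => (hB h).2 rfl
  have hθ : ContDiffOn ℝ k normalizedArg B := contDiffOn_normalizedArg.mono hB
  have hγθ := hγ.comp hθ fun z hz => hz.2
  have hδθ := hδ.comp hθ fun z hz => normalizedArg_mem_Icc hz.1.1.1
  exact ((((contDiffOn_const.mul hnorm).sub contDiffOn_const).smul hγθ).add
    ((contDiffOn_const.sub (contDiffOn_const.mul hnorm)).smul hδθ)).congr fun z hz =>
      polarFill_of_half_le_norm hz.1.2

end PolarFillSmooth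

section Piecewise

variable {n : ℕ}

lemma piecewiseC1On_of_finite_cover {v : ℂ → EuclideanSpace ℂ (Fin n)} {s : Set ℂ}
    {𝒦 : Set (Set ℂ)} (h𝒦 : 𝒦.Finite) (hK : ∀ K ∈ 𝒦, IsCompact K) (hs : s ⊆ ⋃₀ 𝒦)
    (hv : ∀ K ∈ 𝒦, ContDiffOn ℝ 1 v K) : PiecewiseC1On n v s := by
  have := h𝒦.to_subtype
  set e := (Finite.equivFin ↥𝒦).symm
  rw [sUnion_eq_iUnion] at hs
  refine ⟨?_, _, fun i => e i, fun i => hK _ (e i).2, ?_, fun i => hv _ (e i).2⟩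
  · exact ((locallyFinite_of_finite fun K : 𝒦 => (K : Set ℂ)).continuousOn_iUnion
      (fun K => (hK K K.2).isClosed) fun K => (hv K K.2).continuousOn).mono hs
  · rwa [← e.surjective.iUnion_comp] at hs

lemma exists_mem_Icc_castSucc_succ {α : Type*} [LinearOrder α] {m : ℕ} (hm : m ≠ 0)
    (t : Fin (m + 1) → α) {s : α} (hs : s ∈ Icc (t 0) (t (Fin.last m))) :
    ∃ i : Fin m, s ∈ Icc (t i.castSucc) (t i.succ) := by
  obtain ⟨m, rfl⟩ := Nat.exists_eq_succ_of_ne_zero hm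
  by_contra! h
  simp only [mem_Icc, not_and, not_le] at h
  have hle : ∀ j, t j ≤ s := fun j => Fin.induction hs.1 (fun i hi => (h i hi).le) j
  exact (h (Fin.last m) (hle _)).not_ge (by simpa using hs.2)

end Piecewise

lemma isCompact_HDisk : IsCompact HDisk := by
  have hH : HDisk = closedBall 0 1 ∩ {z : ℂ | 0 ≤ z.im} := by
    ext z; simp [HDisk, and_comm]
  rw [hH]
  exact (isCompact_closedBall 0 1).inter_right (isClosed_le continuous_const continuous_im)

lemma polarFill_piecewiseC1On {n : ℕ} {γ δ : ℝ → EuclideanSpace ℂ (Fin n)}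
    (hγ : PiecewiseC1Path n γ) (hδ : ContDiffOn ℝ 1 δ (Icc 0 1)) :
    PiecewiseC1On n (polarFill γ δ) HDisk := by
  obtain ⟨-, m, t, -, ht0, ht1, hγt⟩ := hγ
  have hm : m ≠ 0 := by rintro rfl; exact zero_ne_one (ht0.symm.trans ht1)
  set inner := closedBall (0 : ℂ) (1 / 4)
  set annulus := closedBall (0 : ℂ) (1 / 2) ∩ {z | 0 ≤ z.im ∧ 1 / 4 ≤ ‖z‖}
  set outer := fun i : Fin m =>
    (HDisk ∩ {z | 1 / 2 ≤ ‖z‖}) ∩ normalizedArg ⁻¹' Icc (t i.castSucc) (t i.succ)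
  refine piecewiseC1On_of_finite_cover (((finite_range outer).insert annulus).insert inner)
    ?_ ?_ ?_
  · simp only [forall_mem_insert, forall_mem_range]
    refine ⟨isCompact_closedBall _ _, (isCompact_closedBall _ _).inter_right
      ((isClosed_le continuous_const continuous_im).inter
        (isClosed_le continuous_const continuous_norm)), fun i => ?_⟩
    have hθ : ContinuousOn normalizedArg (HDisk ∩ {z | 1 / 2 ≤ ‖z‖}) :=
      (contDiffOn_normalizedArg (k := 0)).continuousOn.mono fun z hz =>
        ⟨hz.1.1, norm_pos_iff.1 (by linarith [show (1 : ℝ) / 2 ≤ ‖z‖ from hz.2])⟩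
    exact isCompact_HDisk.of_isClosed_subset (hθ.preimage_isClosed_of_isClosed
      (isCompact_HDisk.isClosed.inter (isClosed_le continuous_const continuous_norm))
      isClosed_Icc) fun z hz => hz.1.1
  · intro z hz
    rw [mem_sUnion]
    by_cases h4 : ‖z‖ ≤ 1 / 4
    · exact ⟨inner, Or.inl rfl, mem_closedBall_zero_iff.2 h4⟩
    by_cases h2 : ‖z‖ ≤ 1 / 2
    · exact ⟨annulus, Or.inr (Or.inl rfl), mem_closedBall_zero_iff.2 h2, hz.1, by linarith⟩
    obtain ⟨i, hi⟩ := exists_mem_Icc_castSucc_succ hm t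
      (by rw [ht0, ht1]; exact normalizedArg_mem_Icc hz.1)
    exact ⟨outer i, Or.inr (Or.inr ⟨i, rfl⟩), ⟨hz, (not_le.1 h2).le⟩, hi⟩
  · simp only [forall_mem_insert, forall_mem_range]
    exact ⟨contDiffOn_polarFill_inner, contDiffOn_polarFill_annulus hδ,
      fun i => contDiffOn_polarFill_outer (hγt i) hδ⟩

/-- **Existence of fillings defining the local symplectic action, flat model**
(Theorem 4.1(1) / Corollary 4.6 of Solomon–Verbitsky). For `Q₀ = ℝⁿ × {0}` and
`Q₁ = graph(∇f)` with `f` real analytic on the open set `U ∋ 0` and `∇f(0) = 0`,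
there is `ε₀ > 0` such that for each `ε ∈ (0, ε₀]`, every piecewise-`C¹` path
`γ : [0,1] → B_{ε/9}(0)` with `γ(0) ∈ Q₀`, `γ(1) ∈ Q₁` admits a continuous,
piecewise-`C¹` filling `v : H → B_ε(γ(0))` with `v([0,1]) ⊆ Q₀`, `v([−1,0]) ⊆ Q₁`,
`v(0) = 0` and `v(e^{iπt}) = γ(t)`. -/
theorem exists_filling
    (n : ℕ)
    (U : Set (EuclideanSpace ℝ (Fin n))) (hUopen : IsOpen U)
    (hU0 : (0 : EuclideanSpace ℝ (Fin n)) ∈ U)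
    (f : EuclideanSpace ℝ (Fin n) → ℝ) (hf : AnalyticOn ℝ f U)
    (hgrad : gradient f 0 = 0) :
    ∃ ε₀ : ℝ, 0 < ε₀ ∧
      ∀ ε : ℝ, 0 < ε → ε ≤ ε₀ →
        ∀ γ : ℝ → EuclideanSpace ℂ (Fin n),
          PiecewiseC1Path n γ →
          (∀ t ∈ Set.Icc (0:ℝ) 1,
            γ t ∈ Metric.ball (0 : EuclideanSpace ℂ (Fin n)) (ε / 9)) →
          γ 0 ∈ Q0 n →
          γ 1 ∈ Q1 n U f →
          ∃ v : ℂ → EuclideanSpace ℂ (Fin n),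
            PiecewiseC1On n v HDisk ∧
            (∀ z ∈ HDisk, v z ∈ Metric.ball (γ 0) ε) ∧
            (∀ t ∈ Set.Icc (0:ℝ) 1, v (t : ℂ) ∈ Q0 n) ∧
            (∀ t ∈ Set.Icc (-1:ℝ) 0, v (t : ℂ) ∈ Q1 n U f) ∧
            v 0 = 0 ∧
            (∀ t ∈ Set.Icc (0:ℝ) 1,
              v (Complex.exp (↑(Real.pi * t) * Complex.I)) = γ t) := by
  obtain ⟨r, hr, hpath⟩ := exists_pos_forall_gradientGraphPath hUopen hU0 hf hgrad
  refine ⟨r, hr, fun ε hε hεr γ hγ hγε h0 h1 => ?_⟩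
  have hγnorm : ∀ s ∈ Icc (0 : ℝ) 1, ‖γ s‖ < ε / 9 := fun s hs =>
    mem_ball_zero_iff.1 (hγε s hs)
  have hγ0 := hγnorm 0 ⟨le_rfl, zero_le_one⟩
  have hγ1 := hγnorm 1 ⟨zero_le_one, le_rfl⟩
  have hga : ‖gradient f (reP n (γ 1))‖ < ε / 9 := h1.2 ▸ (norm_imP_le (γ 1)).trans_lt hγ1
  obtain ⟨hδC1, hδ⟩ :=
    hpath (reP n (γ 1)) (mem_ball_zero_iff.2 (by linarith [norm_reP_le (γ 1)]))
  set δ := gradientGraphPath f (reP n (γ 1))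
  have hδ0 : δ 0 = 0 := gradientGraphPath_zero hgrad
  have hδ1 : δ 1 = γ 1 := gradientGraphPath_one.trans (eq_ofReIm_of_mem_Q1 h1).symm
  have hnear : ∀ w, ‖w‖ < 8 * ε / 9 → w ∈ ball (γ 0) ε := fun w hw =>
    mem_ball_iff_norm.2 (by linarith [norm_sub_le w (γ 0)])
  refine ⟨polarFill γ δ, polarFill_piecewiseC1On hγ hδC1, fun z hz => ?_, fun t ht => ?_,
    fun t ht => ?_, by rw [polarFill_zero, hδ0], fun t ht => polarFill_exp_mul_I ht⟩
  · have hθ := normalizedArg_mem_Icc hz.1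
    refine polarFill_mem_of_convex (convex_ball _ _) hz
      (hnear _ (by linarith [hγnorm _ hθ])) fun s hs => hnear _ ?_
    linarith [(hδ s ⟨hs.1, hs.2.trans hθ.2⟩).2, norm_reP_le (γ 1)]
  · exact convex_Q0.segment_subset (hδ0 ▸ fun k => rfl) h0 (polarFill_ofReal_mem_segment ht)
  · obtain ⟨s, hs, hδs⟩ := polarFill_ofReal_mem_image hδ1 ht.2
    exact hδs ▸ (hδ s hs).1

end
end

section
/- Let θ ∈ (1/2, 1) and τ₀ ∈ ℝ. Let e : (−∞, τ₀] → ℝ be differentiable with e(τ) ≥ 0 and e′(τ) ≥ e(τ)^{2θ} for all τ ≤ τ₀. Then for every τ < τ₀ one has e(τ) ≤ c₁ · (τ₀ − τ)^{−1/(2θ−1)}, where c₁ = (2θ − 1)^{−1/(2θ−1)}. -/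
/-- **Power-law decay from the differential inequality `ė ≥ e^{2θ}`** (Lemma 6.5 of
Solomon–Verbitsky). Let `θ ∈ (1/2, 1)`, and let `e : (−∞, τ₀] → ℝ` be differentiable,
nonnegative, with `e′(τ) ≥ e(τ)^{2θ}`. Then for `τ < τ₀`,
`e(τ) ≤ c₁·(τ₀ − τ)^{−1/(2θ−1)}` with `c₁ = (2θ−1)^{−1/(2θ−1)}`. -/
theorem decay_from_differential_inequality
    (θ τ₀ : ℝ) (hθ : 1 / 2 < θ) (hθ1 : θ < 1)
    (e e' : ℝ → ℝ)
    (hderiv : ∀ τ ∈ Set.Iic τ₀, HasDerivWithinAt e (e' τ) (Set.Iic τ₀) τ)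
    (hpos : ∀ τ ∈ Set.Iic τ₀, 0 ≤ e τ)
    (hineq : ∀ τ ∈ Set.Iic τ₀, e τ ^ (2 * θ) ≤ e' τ) :
    ∀ τ < τ₀,
      e τ ≤ (2 * θ - 1) ^ (-(1 / (2 * θ - 1))) * (τ₀ - τ) ^ (-(1 / (2 * θ - 1))) := by
  intro τ hτ
  set α : ℝ := 2 * θ - 1 with hα_def
  have hα : 0 < α := by simp only [hα_def]; linarith
  have hτle : τ ∈ Set.Iic τ₀ := le_of_lt hτ
  have hsub : Set.Icc τ τ₀ ⊆ Set.Iic τ₀ := fun x hx => hx.2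
  have hIoosub : Set.Ioo τ τ₀ ⊆ Set.Iic τ₀ := fun x hx => le_of_lt hx.2
  have hRHSpos : 0 < α ^ (-(1 / α)) * (τ₀ - τ) ^ (-(1 / α)) :=
    mul_pos (Real.rpow_pos_of_pos hα _) (Real.rpow_pos_of_pos (by linarith) _)
  rcases eq_or_lt_of_le (hpos τ hτle) with h0 | h0
  · rw [← h0]; exact hRHSpos.le
  -- e is monotone on Icc τ τ₀
  have hcont : ContinuousOn e (Set.Icc τ τ₀) := fun x hx =>
    ((hderiv x (hsub hx)).continuousWithinAt).mono hsub
  have hmono : MonotoneOn e (Set.Icc τ τ₀) := by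
    apply monotoneOn_of_hasDerivWithinAt_nonneg (convex_Icc τ τ₀) hcont
      (f' := e')
    · intro x hx
      rw [interior_Icc] at hx ⊢
      exact (hderiv x (hIoosub hx)).mono hIoosub
    · intro x hx
      rw [interior_Icc] at hx
      exact le_trans (Real.rpow_nonneg (hpos x (hIoosub hx)) _) (hineq x (hIoosub hx))
  have hepos : ∀ x ∈ Set.Icc τ τ₀, 0 < e x := fun x hx =>
    lt_of_lt_of_le h0 (hmono (Set.left_mem_Icc.2 hτ.le) hx hx.1)
  -- h s = e s ^ (-α) + α * s is antitone on Icc τ τ₀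
  have hanti : AntitoneOn (fun s => e s ^ (-α) + α * s) (Set.Icc τ τ₀) := by
    apply antitoneOn_of_hasDerivWithinAt_nonpos (convex_Icc τ τ₀)
      (f' := fun s => e' s * (-α) * e s ^ (-α - 1) + α * 1)
    · intro x hx
      exact ((hcont x hx).rpow_const (Or.inl (hepos x hx).ne')).add
        ((continuousWithinAt_id.const_mul α))
    · intro x hx
      rw [interior_Icc] at hx ⊢
      have hd : HasDerivWithinAt e (e' x) (Set.Ioo τ τ₀) x :=
        (hderiv x (hIoosub hx)).mono hIoosub
      exact (hd.rpow_const (Or.inl (hepos x (Set.Ioo_subset_Icc_self hx)).ne')).add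
        ((hasDerivWithinAt_id x _).const_mul α)
    · intro x hx
      rw [interior_Icc] at hx
      have hex : 0 < e x := hepos x (Set.Ioo_subset_Icc_self hx)
      have h1 : e x ^ (α + 1) * e x ^ (-α - 1) = 1 := by
        rw [← Real.rpow_add hex]; norm_num
      have h2 : e x ^ (2 * θ) = e x ^ (α + 1) := by
        congr 1; simp [hα_def]
      have hp : 0 < e x ^ (-α - 1) := Real.rpow_pos_of_pos hex _
      have h3 : 1 ≤ e' x * e x ^ (-α - 1) := by
        calc (1 : ℝ) = e x ^ (α + 1) * e x ^ (-α - 1) := h1.symm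
          _ ≤ e' x * e x ^ (-α - 1) := by
              apply mul_le_mul_of_nonneg_right _ hp.le
              rw [← h2]; exact hineq x (hIoosub hx)
      nlinarith
  -- evaluate antitone at τ and τ₀
  have hkey := hanti (Set.left_mem_Icc.2 hτ.le) (Set.right_mem_Icc.2 hτ.le) hτ.le
  simp only at hkey
  have heτ₀ : 0 ≤ e τ₀ ^ (-α) :=
    Real.rpow_nonneg (hpos τ₀ Set.self_mem_Iic) _
  have hmain : α * (τ₀ - τ) ≤ e τ ^ (-α) := by nlinarith
  -- conclude
  have hαt : 0 < α * (τ₀ - τ) := mul_pos hα (by linarith)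
  have hfinal : (e τ ^ (-α)) ^ (-(1 / α)) ≤ (α * (τ₀ - τ)) ^ (-(1 / α)) :=
    Real.rpow_le_rpow_of_nonpos hαt hmain (neg_nonpos.2 (by positivity))
  have hid : (e τ ^ (-α)) ^ (-(1 / α)) = e τ := by
    rw [← Real.rpow_mul h0.le]
    rw [show (-α) * (-(1 / α)) = 1 by field_simp, Real.rpow_one]
  have hsplit : (α * (τ₀ - τ)) ^ (-(1 / α)) = α ^ (-(1 / α)) * (τ₀ - τ) ^ (-(1 / α)) :=
    Real.mul_rpow hα.le (by linarith)
  calc e τ = (e τ ^ (-α)) ^ (-(1 / α)) := hid.symm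
    _ ≤ (α * (τ₀ - τ)) ^ (-(1 / α)) := hfinal
    _ = α ^ (-(1 / α)) * (τ₀ - τ) ^ (-(1 / α)) := hsplit
end

section
/- Let θ ∈ (0,1). Let e : (−∞, 0] → ℝ be differentiable and nonnegative, and let ℓ : (−∞, 0] → ℝ be continuous and nonnegative. Assume that for all τ ≤ 0 one has e(τ) ≤ ℓ(τ)^{1/θ} and e′(τ) ≥ ℓ(τ)². Then for all τ′ ≤ τ ≤ 0, (1 − θ) · ∫_{τ′}^{τ} ℓ(s) ds ≤ e(τ)^{1−θ} − e(τ′)^{1−θ}. -/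
/-!
Regularise the energy to `e + ε`, so that `(e + ε) ^ (1 - θ)` is differentiable. Its derivative is
`(1 - θ) e' (e + ε) ^ (-θ) ≥ (1 - θ) ℓ² / (e + ε) ^ θ`, and by subadditivity of `x ↦ x ^ θ` and
`e ^ θ ≤ ℓ` we have `(e + ε) ^ θ ≤ ℓ + ε ^ θ`, so the derivative is at least `(1 - θ) (ℓ - ε ^ θ)`.
Integrating gives the claim up to an error `(1 - θ) ε ^ θ (τ - τ')` and a shift by `ε` in the
energies, both of which vanish as `ε → 0⁺`.
-/

open Set Filter Topology MeasureTheory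

lemma sub_le_sq_div_of_le_add {l δ t : ℝ} (ht : 0 < t) (htl : t ≤ l + δ) :
    l - δ ≤ l ^ 2 / t := by
  rw [le_div_iff₀ ht]
  rcases le_or_gt l δ with hlδ | hδl
  · nlinarith
  · nlinarith [mul_le_mul_of_nonneg_left htl (sub_nonneg.2 hδl.le), sq_nonneg δ]

lemma sub_rpow_le_mul_add_rpow_neg {θ ε e l d : ℝ} (hθ0 : 0 < θ) (hθ1 : θ ≤ 1) (hε : 0 < ε)
    (he : 0 ≤ e) (hl : 0 ≤ l) (hel : e ≤ l ^ (1 / θ)) (hld : l ^ 2 ≤ d) :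
    l - ε ^ θ ≤ d * (e + ε) ^ (-θ) := by
  have hpos : 0 < (e + ε) ^ θ := Real.rpow_pos_of_pos (by linarith) θ
  have heθ : e ^ θ ≤ l := by rwa [one_div, Real.le_rpow_inv_iff_of_pos he hl hθ0] at hel
  have hsub : (e + ε) ^ θ ≤ l + ε ^ θ :=
    (Real.rpow_add_le_add_rpow he hε.le hθ0.le hθ1).trans (by linarith)
  calc l - ε ^ θ ≤ l ^ 2 / (e + ε) ^ θ := sub_le_sq_div_of_le_add hpos hsub
    _ ≤ d / (e + ε) ^ θ := by gcongr
    _ = d * (e + ε) ^ (-θ) := by rw [Real.rpow_neg (by linarith), div_eq_mul_inv]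

section ControlFunction

variable {θ a b : ℝ} {e e' l : ℝ → ℝ}

theorem integral_le_add_rpow_sub_add_rpow (hθ0 : 0 < θ) (hθ1 : θ ≤ 1) (hab : a ≤ b)
    {ε : ℝ} (hε : 0 < ε) (hec : ContinuousOn e (Icc a b))
    (hderiv : ∀ x ∈ Ioo a b, HasDerivAt e (e' x) x) (he : ∀ x ∈ Ioo a b, 0 ≤ e x)
    (hlc : ContinuousOn l (Icc a b)) (hl : ∀ x ∈ Ioo a b, 0 ≤ l x)
    (h1 : ∀ x ∈ Ioo a b, e x ≤ l x ^ (1 / θ)) (h2 : ∀ x ∈ Ioo a b, l x ^ 2 ≤ e' x) :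
    (1 - θ) * ∫ s in a..b, l s ≤
      (e b + ε) ^ (1 - θ) - (e a + ε) ^ (1 - θ) + (1 - θ) * ε ^ θ * (b - a) := by
  have hθ' : 0 ≤ 1 - θ := by linarith
  have hlint : IntegrableOn l (Icc a b) := hlc.integrableOn_compact isCompact_Icc
  have hbound : ∫ s in a..b, (1 - θ) * (l s - ε ^ θ) ≤
      (e b + ε) ^ (1 - θ) - (e a + ε) ^ (1 - θ) := by
    refine intervalIntegral.integral_le_sub_of_hasDeriv_right_of_le hab
      ((hec.add continuousOn_const).rpow_const fun _ _ => Or.inr hθ')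
      (fun x hx => (((hderiv x hx).add_const ε).rpow_const
        (Or.inl (by linarith [he x hx]))).hasDerivWithinAt)
      ((hlint.sub (integrableOn_const (by simp))).const_mul _) fun x hx => ?_
    have := mul_le_mul_of_nonneg_left (sub_rpow_le_mul_add_rpow_neg hθ0 hθ1 hε (he x hx)
      (hl x hx) (h1 x hx) (h2 x hx)) hθ'
    rw [show 1 - θ - 1 = -θ by ring]
    linarith
  rw [intervalIntegral.integral_const_mul,
    intervalIntegral.integral_sub (hlc.intervalIntegrable_of_Icc hab) intervalIntegrable_const,
    intervalIntegral.integral_const, smul_eq_mul] at hbound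
  linarith

theorem integral_le_rpow_sub_rpow (hθ0 : 0 < θ) (hθ1 : θ ≤ 1) (hab : a ≤ b)
    (hec : ContinuousOn e (Icc a b)) (hderiv : ∀ x ∈ Ioo a b, HasDerivAt e (e' x) x)
    (he : ∀ x ∈ Ioo a b, 0 ≤ e x) (hlc : ContinuousOn l (Icc a b)) (hl : ∀ x ∈ Ioo a b, 0 ≤ l x)
    (h1 : ∀ x ∈ Ioo a b, e x ≤ l x ^ (1 / θ)) (h2 : ∀ x ∈ Ioo a b, l x ^ 2 ≤ e' x) :
    (1 - θ) * ∫ s in a..b, l s ≤ e b ^ (1 - θ) - e a ^ (1 - θ) := by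
  have hθ' : 0 ≤ 1 - θ := by linarith
  set bound : ℝ → ℝ := fun ε ↦
    (e b + ε) ^ (1 - θ) - (e a + ε) ^ (1 - θ) + (1 - θ) * ε ^ θ * (b - a)
  have hcont : ContinuousAt bound 0 := by
    fun_prop (disch := first | exact Or.inr hθ' | exact Or.inr hθ0.le)
  have hzero : bound 0 = e b ^ (1 - θ) - e a ^ (1 - θ) := by
    simp [bound, Real.zero_rpow hθ0.ne']
  have hlim : Tendsto bound (𝓝[>] 0) (𝓝 (bound 0)) := hcont.tendsto.mono_left nhdsWithin_le_nhds
  rw [← hzero]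
  exact ge_of_tendsto hlim
    (eventually_mem_nhdsWithin.mono fun ε hε ↦
      integral_le_add_rpow_sub_add_rpow hθ0 hθ1 hab hε hec hderiv he hlc hl h1 h2)

end ControlFunction

/-- **Łojasiewicz's control-function argument** (abstracted from Lemma 6.7 of
Solomon–Verbitsky). Let `θ ∈ (0,1)`, let `e : (−∞,0] → ℝ` be differentiable and
nonnegative and `l : (−∞,0] → ℝ` continuous and nonnegative, with `e(τ) ≤ l(τ)^{1/θ}`
and `e′(τ) ≥ l(τ)²` for all `τ ≤ 0`. Then for all `τ′ ≤ τ ≤ 0`,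
`(1 − θ)·∫_{τ′}^{τ} l(s) ds ≤ e(τ)^{1−θ} − e(τ′)^{1−θ}`. -/
theorem control_function_argument
    (θ : ℝ) (hθ0 : 0 < θ) (hθ1 : θ < 1)
    (e e' l : ℝ → ℝ)
    (hderiv : ∀ τ ∈ Set.Iic (0:ℝ), HasDerivWithinAt e (e' τ) (Set.Iic (0:ℝ)) τ)
    (he : ∀ τ ∈ Set.Iic (0:ℝ), 0 ≤ e τ)
    (hlc : ContinuousOn l (Set.Iic (0:ℝ)))
    (hl : ∀ τ ∈ Set.Iic (0:ℝ), 0 ≤ l τ)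
    (h1 : ∀ τ ∈ Set.Iic (0:ℝ), e τ ≤ l τ ^ (1 / θ))
    (h2 : ∀ τ ∈ Set.Iic (0:ℝ), l τ ^ 2 ≤ e' τ) :
    ∀ τ' τ : ℝ, τ' ≤ τ → τ ≤ 0 →
      (1 - θ) * ∫ s in τ'..τ, l s ≤ e τ ^ (1 - θ) - e τ' ^ (1 - θ) := by
  intro τ' τ hτ'τ hτ
  have hIcc : Icc τ' τ ⊆ Iic 0 := fun x hx ↦ hx.2.trans hτ
  have hIoo : ∀ x ∈ Ioo τ' τ, x ∈ Iic 0 := fun x hx ↦ hIcc (Ioo_subset_Icc_self hx)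
  refine integral_le_rpow_sub_rpow hθ0 hθ1.le hτ'τ
    (fun x hx ↦ (hderiv x (hIcc hx)).continuousWithinAt.mono hIcc)
    (fun x hx ↦ (hderiv x (hIoo x hx)).hasDerivAt (Iic_mem_nhds (hx.2.trans_le hτ)))
    (fun x hx ↦ he x (hIoo x hx)) (hlc.mono hIcc) (fun x hx ↦ hl x (hIoo x hx))
    (fun x hx ↦ h1 x (hIoo x hx)) (fun x hx ↦ h2 x (hIoo x hx))
end

section
/- Let V be a real inner product space equipped with three linear maps I, J, K : V → V satisfying I² = J² = K² = −id and IJ = −JI = K, each preserving the inner product (⟨Ix, Iy⟩ = ⟨Jx, Jy⟩ = ⟨Kx, Ky⟩ = ⟨x, y⟩ for all x, y). For a linear map Θ : V → V define ω_Θ(x,y) := ⟨Θx, y⟩. Let x₀, y₀ ∈ ℝ with x₀² + y₀² = 1, set Θ₀ = x₀·J + y₀·K, and let A : ℝ² → V be a real-linear map with Ae₂ = Θ₀(Ae₁). Then for all x, y ∈ ℝ, ω_{x·J + y·K}(Ae₁, Ae₂) = (x·x₀ + y·y₀)·‖Ae₁‖². Consequently, on the circle {(x,y) : x² + y² = 1}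 the quantity ω_{x·J+y·K}(Ae₁, Ae₂) is at most ‖Ae₁‖², with equality exactly at (x,y) = (x₀, y₀); and if A ≠ 0 this maximum is strictly positive and attained only there. -/
/-!
Since `K = IJ`, the vectors `A e₁` and `A e₂` lie in the real span of `w := J (A e₁)` and
`I w`. An orthogonal map `I` with `I² = -1` is skew, so `I w ⊥ w`, and `‖I w‖ = ‖w‖ = ‖A e₁‖`.
Hence `ω_{xJ+yK}(Ae₁, Ae₂)` is the Euclidean inner product of `(x, y)` and `(x₀, y₀)` times
`‖A e₁‖²`, and on the unit circle `1 - (x x₀ + y y₀) = ‖(x, y) - (x₀, y₀)‖² / 2`.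
-/

open scoped RealInnerProductSpace

section OrthogonalComplexStructure

variable {V : Type*} [NormedAddCommGroup V] [InnerProductSpace ℝ V] {f : V →ₗ[ℝ] V}

theorem inner_self_map_eq_zero_of_sq_eq_neg (hf2 : ∀ v, f (f v) = -v)
    (hf : ∀ x y : V, ⟪f x, f y⟫ = ⟪x, y⟫) (w : V) : ⟪w, f w⟫ = 0 := by
  have h := hf (f w) w
  rw [hf2, inner_neg_left, real_inner_comm w (f w)] at h
  linarith

theorem inner_smul_add_smul_map (hf2 : ∀ v, f (f v) = -v)
    (hf : ∀ x y : V, ⟪f x, f y⟫ = ⟪x, y⟫) (w : V) (a b c d : ℝ) :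
    ⟪a • w + b • f w, c • w + d • f w⟫ = (a * c + b * d) * ‖w‖ ^ 2 := by
  have horth := inner_self_map_eq_zero_of_sq_eq_neg hf2 hf w
  have horth' : ⟪f w, w⟫ = 0 := by rw [real_inner_comm]; exact horth
  simp only [inner_add_left, inner_add_right, real_inner_smul_left, real_inner_smul_right,
    hf, horth, horth', real_inner_self_eq_norm_sq]
  ring

end OrthogonalComplexStructure

theorem sq_dist_eq_two_mul_one_sub_dot {x y x₀ y₀ : ℝ} (h : x ^ 2 + y ^ 2 = 1)
    (h₀ : x₀ ^ 2 + y₀ ^ 2 = 1) :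
    (x - x₀) ^ 2 + (y - y₀) ^ 2 = 2 * (1 - (x * x₀ + y * y₀)) := by
  linear_combination h + h₀

theorem LinearMap.eq_zero_of_apply_one_zero_of_apply_zero_one {M : Type*} [AddCommMonoid M]
    [Module ℝ M] {A : (ℝ × ℝ) →ₗ[ℝ] M} (h₁ : A (1, 0) = 0) (h₂ : A (0, 1) = 0) : A = 0 :=
  LinearMap.prod_ext (LinearMap.ext_ring h₁) (LinearMap.ext_ring h₂)

theorem twistor_circle_maximum_general
    {V : Type*} [NormedAddCommGroup V] [InnerProductSpace ℝ V]
    (I J K : V →ₗ[ℝ] V)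
    (hI2 : ∀ v, I (I v) = -v)
    (hIJ : ∀ v, I (J v) = K v)
    (hIinner : ∀ x y : V, (inner ℝ (I x) (I y) : ℝ) = inner ℝ x y)
    (hJinner : ∀ x y : V, (inner ℝ (J x) (J y) : ℝ) = inner ℝ x y)
    (x₀ y₀ : ℝ) (hxy : x₀ ^ 2 + y₀ ^ 2 = 1)
    (A : (ℝ × ℝ) →ₗ[ℝ] V)
    (hA : A (0, 1) = (x₀ • J + y₀ • K) (A (1, 0))) :
    (∀ x y : ℝ, (inner ℝ ((x • J + y • K) (A (1, 0))) (A (0, 1)) : ℝ)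
        = (x * x₀ + y * y₀) * ‖A (1, 0)‖ ^ 2) ∧
    (∀ x y : ℝ, x ^ 2 + y ^ 2 = 1 →
        (inner ℝ ((x • J + y • K) (A (1, 0))) (A (0, 1)) : ℝ) ≤ ‖A (1, 0)‖ ^ 2) ∧
    ((inner ℝ ((x₀ • J + y₀ • K) (A (1, 0))) (A (0, 1)) : ℝ) = ‖A (1, 0)‖ ^ 2) ∧
    (A ≠ 0 →
      (0 : ℝ) < ‖A (1, 0)‖ ^ 2 ∧
      ∀ x y : ℝ, x ^ 2 + y ^ 2 = 1 →
        (inner ℝ ((x • J + y • K) (A (1, 0))) (A (0, 1)) : ℝ) = ‖A (1, 0)‖ ^ 2 →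
        (x, y) = (x₀, y₀)) := by
  set v := A (1, 0)
  have hJv : ‖J v‖ ^ 2 = ‖v‖ ^ 2 := by
    rw [← real_inner_self_eq_norm_sq, hJinner, real_inner_self_eq_norm_sq]
  have hω : ∀ x y : ℝ, ⟪(x • J + y • K) v, A (0, 1)⟫ = (x * x₀ + y * y₀) * ‖v‖ ^ 2 := by
    intro x y
    simp only [hA, LinearMap.add_apply, LinearMap.smul_apply, ← hIJ]
    rw [inner_smul_add_smul_map hI2 hIinner, hJv]
  have hdist := fun x y (h : x ^ 2 + y ^ 2 = 1) => sq_dist_eq_two_mul_one_sub_dot h hxy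
  refine ⟨hω, fun x y h => ?_, by rw [hω, ← sq, ← sq, hxy, one_mul], fun hA0 => ?_⟩
  · have hdot : x * x₀ + y * y₀ ≤ 1 := by
      linarith [hdist x y h, sq_nonneg (x - x₀), sq_nonneg (y - y₀)]
    rw [hω]
    exact mul_le_of_le_one_left (sq_nonneg _) hdot
  · have hv : v ≠ 0 := fun hv0 =>
      hA0 (LinearMap.eq_zero_of_apply_one_zero_of_apply_zero_one hv0 (by simp [hA, v, hv0]))
    have hpos : 0 < ‖v‖ ^ 2 := by positivity
    refine ⟨hpos, fun x y h heq => ?_⟩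
    rw [hω, mul_eq_right₀ hpos.ne'] at heq
    have hzero : (x - x₀) ^ 2 + (y - y₀) ^ 2 = 0 := by rw [hdist x y h, heq]; ring
    rw [add_eq_zero_iff_of_nonneg (sq_nonneg _) (sq_nonneg _), sq_eq_zero_iff, sq_eq_zero_iff,
      sub_eq_zero, sub_eq_zero] at hzero
    rw [hzero.1, hzero.2]

/-- **Quaternionic pointwise identity underlying the main theorem of
Solomon–Verbitsky** (Theorem 1.5). Let `(I, J, K)` be a quaternionic triple of
orthogonal complex structures on a real inner product space `V`, and for a linear map
`Θ` set `ω_Θ(x,y) = ⟨Θx, y⟩`. Let `x₀² + y₀² = 1`, `Θ₀ = x₀J + y₀K`, and let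
`A : ℝ² → V` be real-linear with `Ae₂ = Θ₀(Ae₁)`. Then
`ω_{xJ+yK}(Ae₁, Ae₂) = (xx₀ + yy₀)·‖Ae₁‖²` for all `x, y`; on the unit circle this is
`≤ ‖Ae₁‖²`, with equality at `(x₀, y₀)`; and if `A ≠ 0` the maximum is strictly
positive and attained only at `(x₀, y₀)`. -/
theorem twistor_circle_maximum
    {V : Type*} [NormedAddCommGroup V] [InnerProductSpace ℝ V]
    (I J K : V →ₗ[ℝ] V)
    (hI2 : ∀ v, I (I v) = -v) (hJ2 : ∀ v, J (J v) = -v) (hK2 : ∀ v, K (K v) = -v)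
    (hIJ : ∀ v, I (J v) = K v) (hJI : ∀ v, J (I v) = -(K v))
    (hIinner : ∀ x y : V, (inner ℝ (I x) (I y) : ℝ) = inner ℝ x y)
    (hJinner : ∀ x y : V, (inner ℝ (J x) (J y) : ℝ) = inner ℝ x y)
    (hKinner : ∀ x y : V, (inner ℝ (K x) (K y) : ℝ) = inner ℝ x y)
    (x₀ y₀ : ℝ) (hxy : x₀ ^ 2 + y₀ ^ 2 = 1)
    (A : (ℝ × ℝ) →ₗ[ℝ] V)
    (hA : A (0, 1) = (x₀ • J + y₀ • K) (A (1, 0))) :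
    (∀ x y : ℝ, (inner ℝ ((x • J + y • K) (A (1, 0))) (A (0, 1)) : ℝ)
        = (x * x₀ + y * y₀) * ‖A (1, 0)‖ ^ 2) ∧
    (∀ x y : ℝ, x ^ 2 + y ^ 2 = 1 →
        (inner ℝ ((x • J + y • K) (A (1, 0))) (A (0, 1)) : ℝ) ≤ ‖A (1, 0)‖ ^ 2) ∧
    ((inner ℝ ((x₀ • J + y₀ • K) (A (1, 0))) (A (0, 1)) : ℝ) = ‖A (1, 0)‖ ^ 2) ∧
    (A ≠ 0 →
      (0 : ℝ) < ‖A (1, 0)‖ ^ 2 ∧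
      ∀ x y : ℝ, x ^ 2 + y ^ 2 = 1 →
        (inner ℝ ((x • J + y • K) (A (1, 0))) (A (0, 1)) : ℝ) = ‖A (1, 0)‖ ^ 2 →
        (x, y) = (x₀, y₀)) :=
  twistor_circle_maximum_general I J K hI2 hIJ hIinner hJinner x₀ y₀ hxy A hA
end
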